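/- Every nilpotent evolution algebra of type [2,1,1,1] over a field of characteristic not two is decomposable. -/

import Mathlib

/-- The multiplication of a (not necessarily associative) `F`-algebra structure on `A`,
given as a bilinear map. -/
abbrev Mul2 (F A : Type*) [Field F] [AddCommGroup A] [Module F A] :=
  A →ₗ[F] A →ₗ[F] A

variable {F A : Type*} [Field F] [AddCommGroup A] [Module F A]

/-- A submodule is an ideal if it absorbs multiplication on both sides. -/
def IsIdeal (m : Mul2 F A) (I : Submodule F A) : Prop :=
  ∀ x ∈ I, ∀ y : A, m x y ∈ I ∧ m y x ∈ I

/-- An algebra is decomposable if it is the direct sum of two nonzero ideals. -/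
def Decomposable (m : Mul2 F A) : Prop :=
  ∃ I J : Submodule F A, IsIdeal m I ∧ IsIdeal m J ∧ I ≠ ⊥ ∧ J ≠ ⊥ ∧
    I ⊓ J = ⊥ ∧ I ⊔ J = ⊤

/-- The set of `x` with `x A ⊆ N` and `A x ⊆ N`, as a submodule. -/
def annOver (m : Mul2 F A) (N : Submodule F A) : Submodule F A where
  carrier := {x | ∀ y : A, m x y ∈ N ∧ m y x ∈ N}
  add_mem' := by
    intro a b ha hb y
    constructor
    · simpa using N.add_mem (ha y).1 (hb y).1
    · simpa using N.add_mem (ha y).2 (hb y).2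
  zero_mem' := by intro y; simp
  smul_mem' := by
    intro c a ha y
    constructor
    · simpa using N.smul_mem c (ha y).1
    · simpa using N.smul_mem c (ha y).2

/-- The annihilator `{x | xA = Ax = 0}`. -/
def annA (m : Mul2 F A) : Submodule F A := annOver m ⊥

/-- The upper annihilating series: `Ann⁰ = 0`, `Annⁱ/Annⁱ⁻¹ = Ann(A/Annⁱ⁻¹)`. -/
def annSeries (m : Mul2 F A) : ℕ → Submodule F A
  | 0 => ⊥
  | (k+1) => annOver m (annSeries m k)

/-- The span of all products of elements of `I` with elements of `J`. -/
def mulSub (m : Mul2 F A) (I J : Submodule F A) : Submodule F A :=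
  Submodule.span F {z | ∃ x ∈ I, ∃ y ∈ J, z = m x y}

/-- `A²`, the span of all products. -/
def sqA (m : Mul2 F A) : Submodule F A := mulSub m ⊤ ⊤

/-- Right powers: `rpow 0 = A = A^{<1>}`, `rpow (k+1) = (rpow k) · A`. -/
def rpow (m : Mul2 F A) : ℕ → Submodule F A
  | 0 => ⊤
  | (k+1) => mulSub m (rpow m k) ⊤

/-- Full powers: `apow 0 = A = A¹`, `apow (k+1) = Σ_{i+j=k} (apow i)(apow j)`,
i.e. `A^{k+2} = Σ_{i=1}^{k+1} Aⁱ A^{k+2-i}`. -/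
def apow (m : Mul2 F A) : ℕ → Submodule F A
  | 0 => ⊤
  | (k+1) => ⨆ i : Fin (k+1), mulSub m (apow m i.1) (apow m (k - i.1))
  decreasing_by
  · exact i.2
  · exact Nat.lt_succ_of_le (Nat.sub_le _ _)

/-- `A` is nilpotent: `Aⁿ = 0` for some `n`. -/
def IsNilpotentAlg (m : Mul2 F A) : Prop := ∃ n, apow m n = ⊥

/-- `A` is right nilpotent: `A^{<n>} = 0` for some `n`. -/
def IsRightNilpotentAlg (m : Mul2 F A) : Prop := ∃ n, rpow m n = ⊥

/-- A basis is natural if products of distinct basis vectors vanish. -/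
def NaturalBasis (m : Mul2 F A) {ι : Type*} (bs : Module.Basis ι F A) : Prop :=
  ∀ i j, i ≠ j → m (bs i) (bs j) = 0

/-- An evolution algebra: commutative with some finite natural basis. -/
def IsEvolutionAlg (m : Mul2 F A) : Prop :=
  (∀ x y, m x y = m y x) ∧
  ∃ (ι : Type) (_ : Fintype ι) (bs : Module.Basis ι F A), NaturalBasis m bs

/-- The set of `x` with `x N = 0`, as a submodule. -/
def annIn (m : Mul2 F A) (N : Submodule F A) : Submodule F A where
  carrier := {x | ∀ y ∈ N, m x y = 0}
  add_mem' := by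
    intro a b ha hb y hy
    simp [ha y hy, hb y hy]
  zero_mem' := by intro y hy; simp
  smul_mem' := by
    intro c a ha y hy
    simp [ha y hy]

/-!
In a natural basis `eᵢ` one has `Annᵏ⁺¹ = span {eᵢ | eᵢ² ∈ Annᵏ}`. For type `[2,1,1,1]` this
leaves exactly three nonzero squares, `u ∈ Ann`, `v ∈ Ann² \ Ann` and `t ∉ Ann²`, and
`A² ⊆ span {u, v, t}`. This flag forces `Ann ∩ span {u, v, t} ⊆ F u`, so the two-dimensional `Ann`
is not contained in `A²`. A vector `w ∈ Ann \ A²` then splits off: `F w` is an ideal, and so is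
every complement of `F w` containing `A²`.
-/

lemma Submodule.span_singleton_sup_inf_of_notMem {S N : Submodule F A} {x : A} (hS : S ≤ N)
    (hx : x ∉ N) : ((F ∙ x) ⊔ S) ⊓ N = S := by
  rw [sup_comm, sup_inf_assoc_of_le _ hS,
    (Submodule.disjoint_span_singleton_of_notMem hx).symm.eq_bot, sup_bot_eq]

lemma Module.Basis.finrank_span_image {ι : Type*} (bs : Module.Basis ι F A) (s : Set ι) :
    Module.finrank F (Submodule.span F (bs '' s)) = s.ncard := by
  rw [Module.finrank, Set.ncard_def, ← toENat_rank_span_set (bs.linearIndependent.linearIndepOn s)]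
  rfl

lemma annSeries_one (m : Mul2 F A) : annSeries m 1 = annA m := rfl

lemma annOver_mono (m : Mul2 F A) {N N' : Submodule F A} (h : N ≤ N') :
    annOver m N ≤ annOver m N' :=
  fun _ hx y => ⟨h (hx y).1, h (hx y).2⟩

lemma annSeries_le_succ (m : Mul2 F A) (k : ℕ) : annSeries m k ≤ annSeries m (k + 1) := by
  induction k with
  | zero => exact bot_le
  | succ k ih => exact annOver_mono m ih

lemma mul_mem_sqA (m : Mul2 F A) (x y : A) : m x y ∈ sqA m :=
  Submodule.subset_span ⟨x, trivial, y, trivial, rfl⟩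

lemma isIdeal_of_sqA_le {m : Mul2 F A} {I : Submodule F A} (h : sqA m ≤ I) : IsIdeal m I :=
  fun x _ y => ⟨h (mul_mem_sqA m x y), h (mul_mem_sqA m y x)⟩

lemma isIdeal_of_le_annA {m : Mul2 F A} {I : Submodule F A} (h : I ≤ annA m) : IsIdeal m I := by
  intro x hx y
  obtain ⟨hxy, hyx⟩ := h hx y
  rw [(Submodule.mem_bot F).1 hxy, (Submodule.mem_bot F).1 hyx]
  exact ⟨I.zero_mem, I.zero_mem⟩

theorem decomposable_of_not_annA_le_sqA {m : Mul2 F A} (hann : ¬ annA m ≤ sqA m)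
    (hsq : sqA m ≠ ⊥) : Decomposable m := by
  obtain ⟨w, hw, hwsq⟩ := SetLike.not_le_iff_exists.1 hann
  obtain ⟨J, hsqJ, hJ⟩ := (Submodule.disjoint_span_singleton_of_notMem hwsq).exists_isCompl
  refine ⟨F ∙ w, J, isIdeal_of_le_annA ((Submodule.span_singleton_le_iff_mem _ _).2 hw),
    isIdeal_of_sqA_le hsqJ, ?_, ne_bot_of_le_ne_bot hsq hsqJ, hJ.symm.inf_eq_bot,
    hJ.symm.sup_eq_top⟩
  rw [ne_eq, Submodule.span_singleton_eq_bot]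
  exact fun h => hwsq (h ▸ (sqA m).zero_mem)

theorem not_annA_le_sqA_of_sqA_le_span {m : Mul2 F A} {u v t : A}
    (hsq : sqA m ≤ (F ∙ t) ⊔ ((F ∙ v) ⊔ (F ∙ u))) (hu : u ∈ annSeries m 1)
    (hv : v ∈ annSeries m 2) (hv₁ : v ∉ annSeries m 1) (ht : t ∉ annSeries m 2)
    (hrank : 1 < Module.finrank F (annA m)) : ¬ annA m ≤ sqA m := by
  intro hle
  rw [← annSeries_one] at hle hrank
  have hu₂ : u ∈ annSeries m 2 := annSeries_le_succ m 1 hu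
  have hvu : annSeries m 1 ≤ (F ∙ v) ⊔ (F ∙ u) := calc
    annSeries m 1 ≤ ((F ∙ t) ⊔ ((F ∙ v) ⊔ (F ∙ u))) ⊓ annSeries m 2 :=
      le_inf (hle.trans hsq) (annSeries_le_succ m 1)
    _ = (F ∙ v) ⊔ (F ∙ u) := Submodule.span_singleton_sup_inf_of_notMem
      (sup_le ((Submodule.span_singleton_le_iff_mem _ _).2 hv)
        ((Submodule.span_singleton_le_iff_mem _ _).2 hu₂)) ht
  have h_u : annSeries m 1 ≤ F ∙ u := calc
    annSeries m 1 ≤ ((F ∙ v) ⊔ (F ∙ u)) ⊓ annSeries m 1 := le_inf hvu le_rfl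
    _ = F ∙ u := Submodule.span_singleton_sup_inf_of_notMem
      ((Submodule.span_singleton_le_iff_mem _ _).2 hu) hv₁
  have := (Submodule.finrank_mono h_u).trans (finrank_span_le_card ({u} : Set A))
  simp only [Set.toFinset_singleton, Finset.card_singleton] at this
  omega

namespace NaturalBasis

variable {m : Mul2 F A} {ι : Type*} {bs : Module.Basis ι F A}

lemma mul_basis_right (h : NaturalBasis m bs) (x : A) (i : ι) :
    m x (bs i) = bs.repr x i • m (bs i) (bs i) := by
  refine LinearMap.congr_fun (bs.ext (f₁ := m.flip (bs i))
    (f₂ := (bs.coord i).smulRight (m (bs i) (bs i))) fun j => ?_) x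
  rcases eq_or_ne j i with rfl | hji
  · simp
  · simp [h j i hji, hji.symm]

lemma mul_basis_left (h : NaturalBasis m bs) (x : A) (i : ι) :
    m (bs i) x = bs.repr x i • m (bs i) (bs i) := by
  refine LinearMap.congr_fun (bs.ext (f₁ := m (bs i))
    (f₂ := (bs.coord i).smulRight (m (bs i) (bs i))) fun j => ?_) x
  rcases eq_or_ne j i with rfl | hji
  · simp
  · simp [h i j hji.symm, hji.symm]

lemma annOver_eq_span (h : NaturalBasis m bs) (N : Submodule F A) :
    annOver m N = Submodule.span F (bs '' {i | m (bs i) (bs i) ∈ N}) := by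
  apply le_antisymm
  · intro x hx
    rw [bs.mem_span_image]
    intro i hi
    have hxi := (hx (bs i)).1
    rw [h.mul_basis_right] at hxi
    exact (N.smul_mem_iff (Finsupp.mem_support_iff.1 hi)).1 hxi
  · rw [Submodule.span_le]
    rintro _ ⟨i, hi, rfl⟩ y
    rw [h.mul_basis_left y, h.mul_basis_right y]
    exact ⟨N.smul_mem _ hi, N.smul_mem _ hi⟩

lemma finrank_annOver (h : NaturalBasis m bs) (N : Submodule F A) :
    Module.finrank F (annOver m N) = {i | m (bs i) (bs i) ∈ N}.ncard := by
  rw [h.annOver_eq_span, bs.finrank_span_image]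

lemma sqA_le_span (h : NaturalBasis m bs) :
    sqA m ≤ Submodule.span F (Set.range fun i => m (bs i) (bs i)) := by
  rw [sqA, mulSub, Submodule.span_le]
  rintro _ ⟨x, -, y, -, rfl⟩
  have hmap : (Submodule.span F (Set.range bs)).map (m x) ≤
      Submodule.span F (Set.range fun i => m (bs i) (bs i)) := by
    rw [Submodule.map_span_le]
    rintro _ ⟨i, rfl⟩
    rw [h.mul_basis_right]
    exact Submodule.smul_mem _ _ (Submodule.subset_span ⟨i, rfl⟩)
  exact hmap ⟨y, by rw [bs.span_eq]; trivial, rfl⟩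

lemma exists_sqA_le_span_of_finrank_annSeries [Finite ι] (h : NaturalBasis m bs)
    (hcard : Nat.card ι = 5) (h1 : Module.finrank F (annSeries m 1) = 2)
    (h2 : Module.finrank F (annSeries m 2) = 3) (h3 : Module.finrank F (annSeries m 3) = 4) :
    ∃ u v t : A, t ∈ sqA m ∧ sqA m ≤ (F ∙ t) ⊔ ((F ∙ v) ⊔ (F ∙ u)) ∧ u ∈ annSeries m 1 ∧
      v ∈ annSeries m 2 ∧ v ∉ annSeries m 1 ∧ t ∉ annSeries m 2 := by
  set sq : ι → A := fun i => m (bs i) (bs i)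
  set S : ℕ → Set ι := fun k => {i | sq i ∈ annSeries m k}
  have hS (k : ℕ) : (S k).ncard = Module.finrank F (annSeries m (k + 1)) :=
    (h.finrank_annOver _).symm
  have hmono (k : ℕ) : S k ⊆ S (k + 1) := fun i hi => annSeries_le_succ m k hi
  obtain ⟨i₁, -, hS₁⟩ := (Set.exists_eq_insert_iff_ncard (S 0).toFinite).2
    ⟨hmono 0, by rw [hS, hS, h1, h2]⟩
  obtain ⟨i₂, hi₂, hS₂⟩ := (Set.exists_eq_insert_iff_ncard (S 1).toFinite).2
    ⟨hmono 1, by rw [hS, hS, h2, h3]⟩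
  obtain ⟨i₃, hi₃, hS₃⟩ := (Set.exists_eq_insert_iff_ncard (S 2).toFinite).2
    ⟨(S 2).subset_univ, by rw [Set.ncard_univ, hcard, hS, h3]⟩
  have hS₀ : Submodule.span F (sq '' S 0) = ⊥ := by
    rw [Submodule.span_eq_bot]
    rintro _ ⟨i, hi, rfl⟩
    exact (Submodule.mem_bot F).1 hi
  refine ⟨sq i₁, sq i₂, sq i₃, mul_mem_sqA m _ _, ?_, hS₁.subset (Set.mem_insert i₁ _),
    hS₂.subset (Set.mem_insert i₂ _), hi₂, hi₃⟩
  calc sqA m ≤ Submodule.span F (Set.range sq) := h.sqA_le_span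
    _ = (F ∙ sq i₃) ⊔ ((F ∙ sq i₂) ⊔ (F ∙ sq i₁)) := by
      rw [← Set.image_univ, ← hS₃, ← hS₂, ← hS₁]
      simp only [Set.image_insert_eq, Submodule.span_insert, hS₀, sup_bot_eq]

end NaturalBasis

theorem stmt16_general {F E : Type*} [Field F]
    [AddCommGroup E] [Module F E]
    (m : Mul2 F E) (hev : IsEvolutionAlg m)
    (hdim : Module.finrank F E = 5)
    (h1 : Module.finrank F (annSeries m 1) = 2)
    (h2 : Module.finrank F (annSeries m 2) = 3)
    (h3 : Module.finrank F (annSeries m 3) = 4) :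
    Decomposable m := by
  obtain ⟨-, ι, _, bs, hbs⟩ := hev
  obtain ⟨u, v, t, ht_sq, hsq, hu, hv, hv₁, ht⟩ :=
    hbs.exists_sqA_le_span_of_finrank_annSeries
      (by rw [← Module.finrank_eq_nat_card_basis bs, hdim]) h1 h2 h3
  exact decomposable_of_not_annA_le_sqA
    (not_annA_le_sqA_of_sqA_le_span hsq hu hv hv₁ ht (by rw [← annSeries_one, h1]; norm_num))
    ((Submodule.ne_bot_iff _).2 ⟨t, ht_sq, fun ht₀ => ht (ht₀ ▸ Submodule.zero_mem _)⟩)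

/-- Every nilpotent evolution algebra of type `[2,1,1,1]` over a field of
characteristic ≠ 2 is decomposable. -/
theorem stmt16 {F E : Type*} [Field F] (hchar : (2 : F) ≠ 0)
    [AddCommGroup E] [Module F E] [FiniteDimensional F E]
    (m : Mul2 F E) (hev : IsEvolutionAlg m)
    (hdim : Module.finrank F E = 5)
    (h1 : Module.finrank F (annSeries m 1) = 2)
    (h2 : Module.finrank F (annSeries m 2) = 3)
    (h3 : Module.finrank F (annSeries m 3) = 4)
    (h4 : annSeries m 4 = ⊤) :
    Decomposable m :=
  stmt16_general m hev hdim h1 h2 h3
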